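/- In a single group with externality factor α satisfying α(n-1) ≤ 1 and agents at x_1 ≤ ... ≤ x_n in [0,1], for every facility location y ∈ [x_1, x_n], the maximum cost satisfies max_i c_i(y) ≤ 2 · max_i c_i(y*), where y* = (x_1 + x_n)/2 (the minimizer of the maximum cost over [0,1]). -/

import Mathlib

/-! Let `a = x₁` and `b = xₙ`. Anywhere in `[a, b]` an agent pays at most `b - a` in distance
and at most `α` per other agent, so every cost is at most `(b - a) + α (n - 1)`. At the midpoint
the leftmost agent pays `(b - a) / 2` in distance, and since `b - a ≤ 1` every other agent is
within `1 / 2` of the midpoint, so that agent pays at least `α / 2` per other agent: exactly half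
the bound. -/

open Finset Set

section ExternalityCost

variable {ι : Type*} [Fintype ι] [DecidableEq ι]

def externalityCost (α : ℝ) (x : ι → ℝ) (i : ι) (y : ℝ) : ℝ :=
  |y - x i| + α * ∑ k ∈ univ.erase i, (1 - |y - x k|)

lemma card_univ_erase (i : ι) : #(univ.erase i) = Fintype.card ι - 1 := by
  rw [card_erase_of_mem (mem_univ i), card_univ]

variable {α a b y : ℝ} {x : ι → ℝ}

lemma externalityCost_le (hα : 0 ≤ α) (hx : ∀ k, x k ∈ Icc a b) (hy : y ∈ Icc a b)
    (i : ι) :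
    externalityCost α x i y ≤ (b - a) + α * (Fintype.card ι - 1 : ℕ) := by
  have hdist : |y - x i| ≤ b - a := by
    rw [abs_le]; constructor <;> linarith [hx i |>.1, hx i |>.2, hy.1, hy.2]
  have hsum : ∑ k ∈ univ.erase i, (1 - |y - x k|) ≤ (Fintype.card ι - 1 : ℕ) := by
    simpa [card_univ_erase] using
      sum_le_card_nsmul (univ.erase i) (fun k => 1 - |y - x k|) 1
        fun k _ => by simp
  unfold externalityCost
  gcongr

lemma externalityCost_midpoint_ge (hα : 0 ≤ α) (hx : ∀ k, x k ∈ Icc a b) (hab : b - a ≤ 1)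
    {i : ι} (hi : x i = a) :
    (b - a) / 2 + α * (Fintype.card ι - 1 : ℕ) / 2 ≤
      externalityCost α x i ((a + b) / 2) := by
  have hdist : |(a + b) / 2 - x i| = (b - a) / 2 := by
    rw [hi, abs_of_nonneg (by linarith [hx i |>.1, hx i |>.2])]; ring
  have hsum : (Fintype.card ι - 1 : ℕ) * (1 / 2 : ℝ) ≤
      ∑ k ∈ univ.erase i, (1 - |(a + b) / 2 - x k|) := by
    simpa [card_univ_erase] using
      card_nsmul_le_sum (univ.erase i) (fun k => 1 - |(a + b) / 2 - x k|) (1 / 2) fun k _ => by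
        have : |(a + b) / 2 - x k| ≤ (b - a) / 2 := by
          rw [abs_le]; constructor <;> linarith [hx k |>.1, hx k |>.2]
        linarith
  unfold externalityCost
  rw [hdist]
  linarith [mul_le_mul_of_nonneg_left hsum hα]

end ExternalityCost

theorem single_group_two_approx (n : ℕ) (hn : 2 ≤ n)
    (hne : (Finset.univ : Finset (Fin n)).Nonempty)
    (x : Fin n → ℝ) (hsorted : Monotone x)
    (hx : ∀ k, x k ∈ Set.Icc (0:ℝ) 1)
    (α : ℝ) (hα : 0 ≤ α)
    (c : Fin n → ℝ → ℝ)
    (hc : ∀ i y, c i y = |y - x i| + α * ∑ k ∈ Finset.univ.erase i, (1 - |y - x k|))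
    (MC : ℝ → ℝ) (hMC : ∀ y, MC y = Finset.univ.sup' hne (fun i => c i y))
    (y : ℝ)
    (hy : y ∈ Set.Icc (x ⟨0, by omega⟩) (x ⟨n - 1, by omega⟩)) :
    MC y ≤ 2 * MC ((x ⟨0, by omega⟩ + x ⟨n - 1, by omega⟩) / 2) := by
  set first : Fin n := ⟨0, by omega⟩
  set last : Fin n := ⟨n - 1, by omega⟩
  have hc : c = externalityCost α x := funext fun i => funext (hc i)
  have hxab : ∀ k, x k ∈ Icc (x first) (x last) := fun k =>
    ⟨hsorted (Fin.mk_le_of_le_val k.val.zero_le),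
      hsorted (Fin.le_def.mpr (Nat.le_sub_one_of_lt k.isLt))⟩
  have hspan : x last - x first ≤ 1 := by linarith [hx first |>.1, hx last |>.2]
  rw [hMC, hMC, hc]
  refine sup'_le _ _ fun j _ => ?_
  calc externalityCost α x j y
      ≤ (x last - x first) + α * (Fintype.card (Fin n) - 1 : ℕ) :=
        externalityCost_le hα hxab hy j
    _ = 2 * ((x last - x first) / 2 + α * (Fintype.card (Fin n) - 1 : ℕ) / 2) := by ring
    _ ≤ 2 * externalityCost α x first ((x first + x last) / 2) := by
      gcongr; exact externalityCost_midpoint_ge hα hxab hspan rfl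
    _ ≤ 2 * univ.sup' hne (fun i => externalityCost α x i ((x first + x last) / 2)) := by
      gcongr; exact le_sup' (fun i => externalityCost α x i _) (mem_univ first)
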